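/- For 0 < d < 1/2, let a_j = Γ(j−d)/(Γ(j+1)Γ(−d)) for j ≥ 1 and a_{j,k} = Γ(k+1) Γ(j−d) Γ(k−d−j+1) / (Γ(k−j+1) Γ(j+1) Γ(−d) Γ(k−d+1)) for 1 ≤ j ≤ k. Then for all 1 ≤ j ≤ k, a_j − a_{j,k} ≤ −a_j · exp( d · Σ_{m=0}^{j−1} 1/(k−d−m) ). -/

import Mathlib

open Real Finset

/-!
Cancelling the Gamma functions that differ by integers writes the Yule–Walker coefficient as
`a_{j,k} = a_j ∏_{m<j} (k - m)/(k - d - m)`, and each factor equals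
`1 + d/(k - d - m) ≤ exp (d/(k - d - m))`.
Since `a_j < 0`, this gives `a_j - a_{j,k} = -a_j (∏ - 1) ≤ -a_j exp (d ∑ 1/(k - d - m))`.
-/

namespace Real

theorem Gamma_neg_of_neg_one_lt_of_neg {s : ℝ} (hs₁ : -1 < s) (hs₀ : s < 0) : Gamma s < 0 := by
  have hpos : 0 < Gamma (s + 1) := Gamma_pos_of_pos (by linarith)
  rw [Gamma_add_one hs₀.ne] at hpos
  exact neg_of_mul_pos_right hpos hs₀.le

theorem Gamma_add_one_eq_prod_mul_Gamma (x : ℝ) (j : ℕ) (hx : ∀ m < j, x ≠ m) :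
    Gamma (x + 1) = (∏ m ∈ range j, (x - m)) * Gamma (x - j + 1) := by
  induction j with
  | zero => simp
  | succ n ih =>
    have hxn : x - n ≠ 0 := sub_ne_zero.mpr (hx n n.lt_succ_self)
    rw [ih fun m hm => hx m (by omega), prod_range_succ, mul_assoc,
      show x - n + 1 = (x - n) + 1 by ring, Gamma_add_one hxn]
    push_cast
    ring_nf

theorem Gamma_ratio_eq_prod_div (x y : ℝ) (j : ℕ) (hx : (j : ℝ) - 1 < x) (hy : (j : ℝ) - 1 < y) :
    Gamma (x + 1) * Gamma (y - j + 1) / (Gamma (x - j + 1) * Gamma (y + 1)) =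
      ∏ m ∈ range j, (x - m) / (y - m) := by
  have cast_lt_of_lt {z : ℝ} (hz : (j : ℝ) - 1 < z) (m : ℕ) (hm : m < j) : (m : ℝ) < z := by
    have : (m : ℝ) + 1 ≤ j := by exact_mod_cast hm
    linarith
  have hGx : Gamma (x - j + 1) ≠ 0 := (Gamma_pos_of_pos (by linarith)).ne'
  have hGy : Gamma (y - j + 1) ≠ 0 := (Gamma_pos_of_pos (by linarith)).ne'
  have hprod : ∏ m ∈ range j, (y - m) ≠ 0 :=
    prod_ne_zero_iff.mpr fun m hm => sub_ne_zero.mpr (cast_lt_of_lt hy m (mem_range.mp hm)).ne'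
  rw [Gamma_add_one_eq_prod_mul_Gamma x j fun m hm => (cast_lt_of_lt hx m hm).ne',
    Gamma_add_one_eq_prod_mul_Gamma y j fun m hm => (cast_lt_of_lt hy m hm).ne', prod_div_distrib]
  field_simp

theorem prod_div_sub_le_exp_sum (x d : ℝ) (j : ℕ) (hd : 0 ≤ d) (h : (j : ℝ) - 1 < x - d) :
    ∏ m ∈ range j, (x - m) / (x - d - m) ≤ exp (d * ∑ m ∈ range j, 1 / (x - d - m)) := by
  rw [mul_sum, exp_sum]
  refine prod_le_prod (fun m hm => ?_) (fun m hm => ?_)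
  all_goals
    have hm : (m : ℝ) + 1 ≤ j := by exact_mod_cast mem_range.mp hm
    have hpos : 0 < x - d - m := by linarith
  · exact div_nonneg (by linarith) hpos.le
  · calc (x - m) / (x - d - m) = d * (1 / (x - d - m)) + 1 := by field_simp; ring
      _ ≤ exp (d * (1 / (x - d - m))) := add_one_le_exp _

end Real

/-- For `0 < d < 1/2`, with `a j = Γ(j-d)/(Γ(j+1)Γ(-d))` and the k-th order
Yule–Walker coefficients `a_{j,k}`, for all `1 ≤ j ≤ k`:
`a j - a_{j,k} ≤ -a j * exp (d * ∑_{m=0}^{j-1} 1/(k-d-m))`. -/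
theorem stmt_12 (d : ℝ) (hd0 : 0 < d) (hd2 : d < 1 / 2)
    (a : ℕ → ℝ) (ak : ℕ → ℕ → ℝ)
    (ha : ∀ j : ℕ, 1 ≤ j →
      a j = Real.Gamma ((j : ℝ) - d) / (Real.Gamma ((j : ℝ) + 1) * Real.Gamma (-d)))
    (hak : ∀ k j : ℕ, 1 ≤ j → j ≤ k →
      ak j k = Real.Gamma ((k : ℝ) + 1) * Real.Gamma ((j : ℝ) - d) *
          Real.Gamma ((k : ℝ) - d - j + 1) /
        (Real.Gamma ((k : ℝ) - j + 1) * Real.Gamma ((j : ℝ) + 1) * Real.Gamma (-d) *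
          Real.Gamma ((k : ℝ) - d + 1))) :
    ∀ k j : ℕ, 1 ≤ j → j ≤ k →
      a j - ak j k ≤
        -a j * Real.exp (d * ∑ m ∈ Finset.range j, 1 / ((k : ℝ) - d - m)) := by
  intro k j hj hjk
  have hjR : (1 : ℝ) ≤ j := by exact_mod_cast hj
  have hjkR : (j : ℝ) ≤ k := by exact_mod_cast hjk
  set P := ∏ m ∈ range j, ((k : ℝ) - m) / ((k : ℝ) - d - m) with hP_def
  have hak_eq : ak j k = a j * P := by
    rw [hak k j hj hjk, ha j hj, hP_def,
      ← Gamma_ratio_eq_prod_div (k : ℝ) ((k : ℝ) - d) j (by linarith) (by linarith)]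
    ring
  have ha_neg : a j < 0 := by
    rw [ha j hj]
    exact div_neg_of_pos_of_neg (Gamma_pos_of_pos (by linarith))
      (mul_neg_of_pos_of_neg (Gamma_pos_of_pos (by linarith))
        (Gamma_neg_of_neg_one_lt_of_neg (by linarith) (by linarith)))
  have hP : P ≤ exp (d * ∑ m ∈ range j, 1 / ((k : ℝ) - d - m)) :=
    prod_div_sub_le_exp_sum (k : ℝ) d j hd0.le (by linarith)
  calc a j - ak j k = -a j * (P - 1) := by rw [hak_eq]; ring
    _ ≤ -a j * exp (d * ∑ m ∈ range j, 1 / ((k : ℝ) - d - m)) :=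
      mul_le_mul_of_nonneg_left (by linarith) (by linarith)
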